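/- arXiv:1605.05858 — 3 statements merged into one kernel-verified Lean document; each statement's English description precedes it below -/
import Mathlib

section
/- The partial order of approximable mappings from finitary basis A to finitary basis B under relational inclusion is isomorphic to the partial order of continuous functions from the domain of A to the domain of B under the pointwise ordering; the isomorphism sends F to the function d ↦ apply(F, d), and its inverse sends f to the relation {(a,b) | I_b ⊆ f(I_a)}. -/
/-- An ideal over a finitary basis. -/
def IsIdeal {B : Type*} [PartialOrder B] (I : Set B) : Prop :=
  I.Nonempty ∧ (∀ e ∈ I, ∀ b : B, b ≤ e → b ∈ I) ∧
    ∀ r ∈ I, ∀ s ∈ I, ∃ l ∈ I, IsLUB {r, s} l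

/-- An approximable mapping between finitary bases (as a relation). -/
def ApproxMap {A B : Type*} [PartialOrder A] [OrderBot A] [PartialOrder B] [OrderBot B]
    (F : A → B → Prop) : Prop :=
  F ⊥ ⊥ ∧
  (∀ a b b', F a b → F a b' → ∃ l : B, IsLUB {b, b'} l ∧ F a l) ∧
  (∀ a b b', F a b → b' ≤ b → F a b') ∧
  (∀ a a' b, F a b → a ≤ a' → F a' b)

/-- The image of an ideal `d` under an approximable mapping `F`. -/
def applyMap {A B : Type*} (F : A → B → Prop) (d : Set A) : Set B :=
  {b : B | ∃ a ∈ d, F a b}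

/-- A continuous function between domains of ideals: it maps ideals to ideals and
satisfies `f I = ⊔ {f I_a | a ∈ I}` (directed lubs being unions). -/
def ContFn {A B : Type*} [PartialOrder A] [PartialOrder B] (f : Set A → Set B) : Prop :=
  (∀ I : Set A, IsIdeal I → IsIdeal (f I)) ∧
  ∀ I : Set A, IsIdeal I → f I = ⋃ a ∈ I, f {x : A | x ≤ a}

/-- An ideal contains `⊥`. -/
lemma IsIdeal.bot_mem {B : Type*} [PartialOrder B] [OrderBot B] {I : Set B}
    (hI : IsIdeal I) : ⊥ ∈ I := by
  obtain ⟨⟨e, he⟩, hdown, -⟩ := hI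
  exact hdown e he ⊥ bot_le

/-- Principal sets are ideals (given consistent completeness). -/
lemma principal_isIdeal {A : Type*} [PartialOrder A]
    (hA : ∀ F : Finset A, (∃ b : A, ∀ x ∈ F, x ≤ b) → ∃ l : A, IsLUB (↑F : Set A) l)
    (a : A) : IsIdeal {x : A | x ≤ a} := by
  classical
  refine ⟨⟨a, le_refl a⟩, fun e he b hb => le_trans hb he, fun r hr s hs => ?_⟩
  obtain ⟨l, hl⟩ := hA {r, s} ⟨a, by
    intro x hx
    rcases Finset.mem_insert.1 hx with h | h
    · exact h ▸ hr
    · exact (Finset.mem_singleton.1 h) ▸ hs⟩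
  have hcoe : (↑({r, s} : Finset A) : Set A) = ({r, s} : Set A) := by
    simp
  rw [hcoe] at hl
  refine ⟨l, ?_, hl⟩
  exact hl.2 (by rintro x (rfl | rfl) <;> [exact hr; exact hs])

/-- `applyMap F` maps ideals to ideals. -/
lemma applyMap_isIdeal {A B : Type*} [PartialOrder A] [OrderBot A] [PartialOrder B] [OrderBot B]
    {F : A → B → Prop} (hF : ApproxMap F) {I : Set A} (hI : IsIdeal I) :
    IsIdeal (applyMap F I) := by
  have hbotI : ⊥ ∈ I := hI.bot_mem
  obtain ⟨hbot, hlub, hdn, hup⟩ := hF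
  obtain ⟨hne, hdown, hdir⟩ := hI
  refine ⟨⟨⊥, ⊥, hbotI, hbot⟩, ?_, ?_⟩
  · rintro e ⟨a, ha, hFae⟩ b hb
    exact ⟨a, ha, hdn a e b hFae hb⟩
  · rintro r ⟨a, ha, hFar⟩ s ⟨a', ha', hFa's⟩
    obtain ⟨c, hc, hclub⟩ := hdir a ha a' ha'
    have hFcr : F c r := hup a c r hFar (hclub.1 (by simp))
    have hFcs : F c s := hup a' c s hFa's (hclub.1 (by simp))
    obtain ⟨l, hl, hFcl⟩ := hlub c r s hFcr hFcs
    exact ⟨l, ⟨c, hc, hFcl⟩, hl⟩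

/-- `applyMap F` over principal ideals recovers `F`. -/
lemma mem_applyMap_principal {A B : Type*} [PartialOrder A] [OrderBot A]
    [PartialOrder B] [OrderBot B]
    {F : A → B → Prop} (hF : ApproxMap F) (a : A) (b : B) :
    b ∈ applyMap F {x : A | x ≤ a} ↔ F a b := by
  constructor
  · rintro ⟨a', ha', hFa'b⟩
    exact hF.2.2.2 a' a b hFa'b ha'
  · intro h
    exact ⟨a, le_refl a, h⟩

/-- The partial order of approximable mappings from `A` to `B` (under relational
inclusion) is isomorphic to the partial order of continuous functions between the
domains of ideals (under the pointwise ordering): `F ↦ (d ↦ apply F d)` is an order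
isomorphism, with inverse `f ↦ {(a,b) | I_b ⊆ f I_a}`. -/
theorem approxMap_orderIso_contFn {A B : Type*}
    [PartialOrder A] [OrderBot A] [Countable A]
    [PartialOrder B] [OrderBot B] [Countable B]
    (hA : ∀ F : Finset A, (∃ b : A, ∀ x ∈ F, x ≤ b) → ∃ l : A, IsLUB (↑F : Set A) l)
    (hB : ∀ F : Finset B, (∃ b : B, ∀ x ∈ F, x ≤ b) → ∃ l : B, IsLUB (↑F : Set B) l) :
    (∀ F : A → B → Prop, ApproxMap F → ContFn (applyMap F)) ∧
    (∀ F G : A → B → Prop, ApproxMap F → ApproxMap G →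
      ((∀ a b, F a b → G a b) ↔
        ∀ d : Set A, IsIdeal d → applyMap F d ⊆ applyMap G d)) ∧
    (∀ F : A → B → Prop, ApproxMap F →
      ∀ a b, F a b ↔ {y : B | y ≤ b} ⊆ applyMap F {x : A | x ≤ a}) ∧
    (∀ f : Set A → Set B, ContFn f →
      ApproxMap (fun (a : A) (b : B) => {y : B | y ≤ b} ⊆ f {x : A | x ≤ a}) ∧
      ∀ d : Set A, IsIdeal d →
        applyMap (fun (a : A) (b : B) => {y : B | y ≤ b} ⊆ f {x : A | x ≤ a}) d = f d) := by
  refine ⟨?_, ?_, ?_, ?_⟩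
  · -- applyMap F is continuous
    intro F hF
    refine ⟨fun I hI => applyMap_isIdeal hF hI, fun I hI => ?_⟩
    ext b
    simp only [Set.mem_iUnion]
    constructor
    · rintro ⟨a, ha, hFab⟩
      exact ⟨a, ha, (mem_applyMap_principal hF a b).2 hFab⟩
    · rintro ⟨a, ha, hb⟩
      exact ⟨a, ha, (mem_applyMap_principal hF a b).1 hb⟩
  · -- order embedding
    intro F G hF hG
    constructor
    · rintro h d _ b ⟨a, ha, hFab⟩
      exact ⟨a, ha, h a b hFab⟩
    · intro h a b hFab
      have hb : b ∈ applyMap G {x : A | x ≤ a} :=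
        h _ (principal_isIdeal hA a) ((mem_applyMap_principal hF a b).2 hFab)
      exact (mem_applyMap_principal hG a b).1 hb
  · -- F a b ↔ I_b ⊆ applyMap F I_a
    intro F hF a b
    constructor
    · intro hFab y hy
      exact (mem_applyMap_principal hF a y).2 (hF.2.2.1 a b y hFab hy)
    · intro h
      exact (mem_applyMap_principal hF a b).1 (h (le_refl b))
  · -- inverse map
    intro f hf
    obtain ⟨hfid, hfcont⟩ := hf
    have hmono : ∀ a a' : A, a ≤ a' → f {x : A | x ≤ a} ⊆ f {x : A | x ≤ a'} := by
      intro a a' haa' b hb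
      rw [hfcont _ (principal_isIdeal hA a')]
      exact Set.mem_iUnion.2 ⟨a, Set.mem_iUnion.2 ⟨haa', hb⟩⟩
    constructor
    · refine ⟨?_, ?_, ?_, ?_⟩
      · -- bot
        intro y hy
        have : y = ⊥ := le_antisymm hy bot_le
        subst this
        exact (hfid _ (principal_isIdeal hA ⊥)).bot_mem
      · -- lub
        intro a b b' hb hb'
        obtain ⟨-, hdown, hdir⟩ := hfid _ (principal_isIdeal hA a)
        obtain ⟨l, hl, hlub⟩ := hdir b (hb (le_refl b)) b' (hb' (le_refl b'))
        exact ⟨l, hlub, fun y hy => hdown l hl y hy⟩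
      · -- down
        intro a b b' hb hb' y hy
        exact hb (le_trans hy hb')
      · -- up
        intro a a' b hb haa' y hy
        exact hmono a a' haa' (hb hy)
    · intro d hd
      ext b
      constructor
      · rintro ⟨a, ha, hIb⟩
        rw [hfcont d hd]
        exact Set.mem_iUnion.2 ⟨a, Set.mem_iUnion.2 ⟨ha, hIb (le_refl b)⟩⟩
      · intro hb
        rw [hfcont d hd] at hb
        obtain ⟨a, ha⟩ := Set.mem_iUnion.1 hb
        obtain ⟨had, hbfa⟩ := Set.mem_iUnion.1 ha
        refine ⟨a, had, fun y hy => ?_⟩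
        obtain ⟨-, hdown, -⟩ := hfid _ (principal_isIdeal hA a)
        exact hdown b hbfa y hy
end

section
/- A relation F ⊆ (A × B) × C on product finitary bases is an approximable mapping if and only if for every a ∈ A and b ∈ B, the restricted relations F_{a,*} = {(y,z) | ((a,y),z) ∈ F} and F_{*,b} = {(x,z) | ((x,b),z) ∈ F} are approximable mappings. -/
/-- A relation `F ⊆ (A × B) × C` on product finitary bases (the product ordered
componentwise) is an approximable mapping iff for every `a ∈ A` and `b ∈ B` the
restricted relations `F_{a,*}` and `F_{*,b}` are approximable mappings. -/
theorem approxMap_prod_iff_sections {A B C : Type*}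
    [PartialOrder A] [OrderBot A] [Countable A]
    [PartialOrder B] [OrderBot B] [Countable B]
    [PartialOrder C] [OrderBot C] [Countable C]
    (hA : ∀ F : Finset A, (∃ b : A, ∀ x ∈ F, x ≤ b) → ∃ l : A, IsLUB (↑F : Set A) l)
    (hB : ∀ F : Finset B, (∃ b : B, ∀ x ∈ F, x ≤ b) → ∃ l : B, IsLUB (↑F : Set B) l)
    (hC : ∀ F : Finset C, (∃ b : C, ∀ x ∈ F, x ≤ b) → ∃ l : C, IsLUB (↑F : Set C) l)
    (F : A × B → C → Prop) :
    ApproxMap F ↔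
      ∀ (a : A) (b : B),
        ApproxMap (fun (y : B) (z : C) => F (a, y) z) ∧
        ApproxMap (fun (x : A) (z : C) => F (x, b) z) := by
  constructor
  · rintro ⟨hbot, hlub, hdown, hmono⟩ a b
    refine ⟨⟨?_, fun y c c' h h' => hlub _ _ _ h h',
        fun y c c' h hle => hdown _ _ _ h hle,
        fun y y' c h hle => hmono _ _ _ h ⟨le_refl a, hle⟩⟩,
      ⟨?_, fun x c c' h h' => hlub _ _ _ h h',
        fun x c c' h hle => hdown _ _ _ h hle,
        fun x x' c h hle => hmono _ _ _ h ⟨hle, le_refl b⟩⟩⟩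
    · exact hmono ⊥ (a, ⊥) ⊥ hbot ⟨bot_le, le_refl _⟩
    · exact hmono ⊥ (⊥, b) ⊥ hbot ⟨le_refl _, bot_le⟩
  · intro h
    refine ⟨(h ⊥ ⊥).1.1, ?_, ?_, ?_⟩
    · rintro ⟨a, b⟩ c c' hc hc'
      exact (h a b).1.2.1 b c c' hc hc'
    · rintro ⟨a, b⟩ c c' hc hle
      exact (h a b).1.2.2.1 b c c' hc hle
    · rintro ⟨a, b⟩ ⟨a', b'⟩ c hc ⟨ha, hb⟩
      have h1 : F (a', b) c := (h a b).2.2.2.2 a a' c hc ha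
      exact (h a' b).1.2.2.2 b b' c h1 hb
end

section
/- Let f: D → D be continuous on a cpo D with bottom, and let (a_n) be a sequence of continuous functions a_n: D → D such that a_0 is constantly ⊥, a_n ⊑ a_{n+1} pointwise, the pointwise lub of the a_n is the identity on D, and a_{n+1} ∘ f = a_{n+1} ∘ f ∘ a_n for all n. Then f has a unique fixed point. -/
/-- Let `f : D → D` be continuous on a cpo with bottom, and let `(aₙ)` be continuous
functions with `a₀` constantly `⊥`, `aₙ ⊑ aₙ₊₁` pointwise, pointwise lub of the `aₙ`
the identity, and `aₙ₊₁ ∘ f = aₙ₊₁ ∘ f ∘ aₙ`.  Then `f` has a unique fixed point. -/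
theorem unique_fixed_point_of_approximations {D : Type*} [PartialOrder D] [OrderBot D]
    (hD : ∀ S : Set D, S.Nonempty → DirectedOn (· ≤ ·) S → ∃ l : D, IsLUB S l)
    (f : D → D) (hf : ScottContinuous f)
    (a : ℕ → D → D) (ha : ∀ n, ScottContinuous (a n))
    (h0 : ∀ x : D, a 0 x = ⊥)
    (hmono : ∀ (n : ℕ) (x : D), a n x ≤ a (n + 1) x)
    (hid : ∀ x : D, IsLUB (Set.range fun n : ℕ => a n x) x)
    (hcomm : ∀ n : ℕ, (a (n + 1)) ∘ f = (a (n + 1)) ∘ f ∘ (a n)) :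
    ∃! x : D, f x = x := by
  -- Existence: Kleene chain
  set c : ℕ → D := fun n => f^[n] ⊥ with hc
  have hmonoc : Monotone c := by
    apply monotone_nat_of_le_succ
    intro n
    induction n with
    | zero => exact bot_le
    | succ k ih =>
      have h1 : c (k+1) = f (c k) := by simp [hc, Function.iterate_succ_apply']
      have h2 : c (k+2) = f (c (k+1)) := by simp [hc, Function.iterate_succ_apply']
      rw [h1, h2]
      exact hf.monotone ih
  have hne : (Set.range c).Nonempty := ⟨c 0, ⟨0, rfl⟩⟩
  have hdir : DirectedOn (· ≤ ·) (Set.range c) := by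
    rintro _ ⟨m, rfl⟩ _ ⟨n, rfl⟩
    exact ⟨c (max m n), ⟨_, rfl⟩, hmonoc (le_max_left m n), hmonoc (le_max_right m n)⟩
  obtain ⟨l, hl⟩ := hD (Set.range c) hne hdir
  have hfl : IsLUB (f '' Set.range c) (f l) := hf hne hdir hl
  have hfix : f l = l := by
    have hl' : IsLUB (Set.range c) (f l) := by
      constructor
      · rintro _ ⟨n, rfl⟩
        cases n with
        | zero => exact bot_le
        | succ k =>
          have : f (c k) ∈ f '' Set.range c := ⟨c k, ⟨k, rfl⟩, rfl⟩
          simpa [hc, Function.iterate_succ_apply'] using hfl.1 this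
      · intro b hb
        apply hfl.2
        rintro _ ⟨_, ⟨n, rfl⟩, rfl⟩
        have : f (c n) = c (n + 1) := by simp [hc, Function.iterate_succ_apply']
        rw [this]; exact hb ⟨n + 1, rfl⟩
    exact hl'.unique hl
  refine ⟨l, hfix, ?_⟩
  intro y hy
  -- Uniqueness: a n x = a n y for any two fixed points
  have key : ∀ (x z : D), f x = x → f z = z → ∀ n, a n x = a n z := by
    intro x z hx hz n
    induction n with
    | zero => rw [h0, h0]
    | succ k ih =>
      have hx' : a (k + 1) x = a (k + 1) (f (a k x)) := by
        conv_lhs => rw [← hx]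
        exact congrFun (hcomm k) x
      have hz' : a (k + 1) z = a (k + 1) (f (a k z)) := by
        conv_lhs => rw [← hz]
        exact congrFun (hcomm k) z
      rw [hx', hz', ih]
  have hxy : ∀ n, (fun n : ℕ => a n y) n = (fun n : ℕ => a n l) n :=
    fun n => key y l hy hfix n
  have : Set.range (fun n : ℕ => a n y) = Set.range (fun n : ℕ => a n l) := by
    simp [funext hxy]
  exact ((this ▸ hid y).unique (hid l))
end
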